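/- For every n ≥ 1, the monomial x^n expands in the q-Frobenius–Euler basis as x^n = (1/(1 − λ)) · ∑_{k=0}^{n−1} C(n,k)_q · H_{k,q}(x|λ) + H_{n,q}(x|λ). -/

import Mathlib

open Finset Polynomial

/-- The `q`-integer `[n]_q = (1 - q^n)/(1 - q)` viewed in `ℂ`. -/
noncomputable def qInt (q : ℝ) (n : ℕ) : ℂ := (1 - (q : ℂ) ^ n) / (1 - (q : ℂ))

/-- The `q`-factorial `[n]_q! = ∏_{j=1}^n [j]_q`. -/
noncomputable def qFact (q : ℝ) (n : ℕ) : ℂ := ∏ j ∈ Finset.range n, qInt q (j + 1)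

/-- The `q`-binomial coefficient `[n]_q!/([k]_q! [n-k]_q!)`. -/
noncomputable def qBinom (q : ℝ) (n k : ℕ) : ℂ := qFact q n / (qFact q k * qFact q (n - k))

/-- The formal `q`-exponential `e_q(t) = ∑ t^n/[n]_q!` in `ℂ[x][[t]]`. -/
noncomputable def qExp (q : ℝ) : PowerSeries (Polynomial ℂ) :=
  PowerSeries.mk fun n => Polynomial.C (1 / qFact q n)

/-- The formal series `e_q(xt) = ∑ x^n t^n/[n]_q!` in `ℂ[x][[t]]`. -/
noncomputable def qExpX (q : ℝ) : PowerSeries (Polynomial ℂ) :=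
  PowerSeries.mk fun n => Polynomial.C (1 / qFact q n) * Polynomial.X ^ n

/-- `H : ℕ → ℂ[x]` is the family of `q`-Frobenius-Euler polynomials `H_{n,q}(x|λ)`:
`(∑ H_n t^n/[n]_q!) ⬝ (e_q(t) - λ) = (1 - λ) e_q(xt)` in `ℂ[x][[t]]`. -/
def IsqFrobeniusEuler (q : ℝ) (lam : ℂ) (H : ℕ → Polynomial ℂ) : Prop :=
  (PowerSeries.mk fun n => Polynomial.C (1 / qFact q n) * H n) *
      (qExp q - PowerSeries.C (Polynomial.C lam)) =
    PowerSeries.C (Polynomial.C (1 - lam)) * qExpX q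

/-
Comparing the coefficients of `t^n / [n]_q!` on both sides of the generating-function identity
gives the `q`-binomial convolution `∑_{k ≤ n} C(n,k)_q H_k - λ H_n = (1 - λ) x^n`.
Since `C(n,n)_q = 1`, the `k = n` term combines with `-λ H_n` into `(1 - λ) H_n`, and dividing
by `1 - λ ≠ 0` yields the expansion.
-/

section qCalculus

variable {q : ℝ}

theorem qFact_zero : qFact q 0 = 1 := Finset.prod_range_zero _

theorem qInt_ne_zero (hq : |q| < 1) {n : ℕ} (hn : n ≠ 0) : qInt q n ≠ 0 := by
  have hpow : (q : ℂ) ^ n ≠ 1 := by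
    exact_mod_cast fun h => (pow_lt_one₀ (abs_nonneg q) hq hn).ne (by rw [← abs_pow, h, abs_one])
  have hq1 : (q : ℂ) ≠ 1 := fun h => hpow (by rw [h, one_pow])
  exact div_ne_zero (sub_ne_zero.mpr hpow.symm) (sub_ne_zero.mpr hq1.symm)

theorem qFact_ne_zero (hq : |q| < 1) (n : ℕ) : qFact q n ≠ 0 :=
  prod_ne_zero_iff.mpr fun j _ => qInt_ne_zero hq j.succ_ne_zero

theorem qBinom_self {n : ℕ} (h : qFact q n ≠ 0) : qBinom q n n = 1 := by
  rw [qBinom, Nat.sub_self, qFact_zero, mul_one, div_self h]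

theorem one_div_qFact_mul_qBinom {n : ℕ} (h : qFact q n ≠ 0) (k : ℕ) :
    1 / qFact q n * qBinom q n k = 1 / qFact q k * (1 / qFact q (n - k)) := by
  rw [qBinom, ← mul_div_assoc, one_div_mul_cancel h, one_div_mul_one_div]

theorem coeff_mul_qExp (a : ℕ → ℂ[X]) {n : ℕ} (h : qFact q n ≠ 0) :
    PowerSeries.coeff n (PowerSeries.mk (fun k => C (1 / qFact q k) * a k) * qExp q) =
      C (1 / qFact q n) * ∑ k ∈ range (n + 1), C (qBinom q n k) * a k := by
  rw [PowerSeries.coeff_mul, Finset.Nat.sum_antidiagonal_eq_sum_range_succ_mk, mul_sum]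
  refine sum_congr rfl fun k _ => ?_
  simp only [qExp, PowerSeries.coeff_mk]
  rw [← mul_assoc, ← C_mul, one_div_qFact_mul_qBinom h, C_mul]
  ring

end qCalculus

theorem IsqFrobeniusEuler.sum_qBinom_mul_add {q : ℝ} {lam : ℂ} {H : ℕ → ℂ[X]}
    (hH : IsqFrobeniusEuler q lam H) {n : ℕ} (hn : qFact q n ≠ 0) :
    ∑ k ∈ range n, C (qBinom q n k) * H k + C (1 - lam) * H n = C (1 - lam) * X ^ n := by
  have hcoeff := congrArg (PowerSeries.coeff n) hH
  rw [mul_sub, map_sub, coeff_mul_qExp H hn, PowerSeries.coeff_mul_C, PowerSeries.coeff_C_mul,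
    qExpX, PowerSeries.coeff_mk, PowerSeries.coeff_mk, sum_range_succ, qBinom_self hn,
    C_sub, C_1, one_mul] at hcoeff
  have hC : (C (1 / qFact q n) : ℂ[X]) ≠ 0 := by simpa using hn
  refine mul_left_cancel₀ hC ?_
  rw [C_sub, C_1]
  linear_combination hcoeff

theorem pow_expansion_in_qFrobeniusEuler_basis_general
    (q : ℝ) (hq0 : 0 < q) (hq1 : q < 1) (lam : ℂ) (hlam : lam ≠ 1)
    (H : ℕ → Polynomial ℂ) (hH : IsqFrobeniusEuler q lam H) (n : ℕ) :
    (Polynomial.X : Polynomial ℂ) ^ n =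
      Polynomial.C (1 / (1 - lam)) *
        (∑ k ∈ Finset.range n, Polynomial.C (qBinom q n k) * H k) + H n := by
  have hq : |q| < 1 := abs_lt.mpr ⟨by linarith, hq1⟩
  have hconv := hH.sum_qBinom_mul_add (qFact_ne_zero hq n)
  have hlam' : (1 : ℂ) - lam ≠ 0 := sub_ne_zero.mpr hlam.symm
  rw [eq_sub_of_add_eq hconv, ← mul_sub, ← mul_assoc, ← C_mul, one_div_mul_cancel hlam', C_1,
    one_mul, sub_add_cancel]

/-- For `n ≥ 1`,
`x^n = (1/(1-λ)) ∑_{k=0}^{n-1} C(n,k)_q H_{k,q}(x|λ) + H_{n,q}(x|λ)`. -/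
theorem pow_expansion_in_qFrobeniusEuler_basis
    (q : ℝ) (hq0 : 0 < q) (hq1 : q < 1) (lam : ℂ) (hlam : lam ≠ 1)
    (H : ℕ → Polynomial ℂ) (hH : IsqFrobeniusEuler q lam H) (n : ℕ) (hn : 1 ≤ n) :
    (Polynomial.X : Polynomial ℂ) ^ n =
      Polynomial.C (1 / (1 - lam)) *
        (∑ k ∈ Finset.range n, Polynomial.C (qBinom q n k) * H k) + H n :=
  pow_expansion_in_qFrobeniusEuler_basis_general q hq0 hq1 lam hlam H hH n
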